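/- Let r be a multiplicative complex-valued arithmetic function supported on squarefree integers with r(p) = 0 for all but finitely many primes, and let c be a complex-valued multiplicative function. Then for any real β, the double sum ∑_{n ≥ 1} \overline{r(n)} c(n) n^{-β} ∑_{m: gcd(m,n)=1} |r(m)|² equals ∏_p (1 + |r(p)|²) · ∏_p (1 + \overline{r(p)} c(p) p^{-β} / (1 + |r(p)|²)), all sums being finite since r has finite support on primes. -/
import Mathlib

open Complex Finset

private lemma map_prod_mult {M : Type*} [CommMonoid M] (f : ℕ → M) (h1 : f 1 = 1)
    (hm : ∀ m n : ℕ, Nat.Coprime m n → f (m * n) = f m * f n)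
    (T : Finset ℕ) (hT : ∀ p ∈ T, Nat.Prime p) :
    f (∏ p ∈ T, p) = ∏ p ∈ T, f p := by
  classical
  induction T using Finset.induction_on with
  | empty => simpa
  | @insert a s ha ih =>
    have hcop : Nat.Coprime a (∏ p ∈ s, p) :=
      Nat.Coprime.prod_right fun p hp =>
        (Nat.coprime_primes (hT a (mem_insert_self a s)) (hT p (mem_insert_of_mem hp))).2
          (fun h => ha (h ▸ hp))
    rw [Finset.prod_insert ha, hm a _ hcop, ih fun p hp => hT p (mem_insert_of_mem hp),
      Finset.prod_insert ha]

private lemma prod_primes_ne_zero (T : Finset ℕ) (hT : ∀ p ∈ T, Nat.Prime p) :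
    (∏ p ∈ T, p) ≠ 0 :=
  Finset.prod_ne_zero_iff.2 fun p hp => (hT p hp).ne_zero

private lemma dvd_prod_iff_mem {p : ℕ} (hp : p.Prime) (T : Finset ℕ)
    (hT : ∀ q ∈ T, Nat.Prime q) : p ∣ (∏ q ∈ T, q) ↔ p ∈ T := by
  constructor
  · intro h
    obtain ⟨q, hq, hpq⟩ := (Nat.Prime.prime hp).dvd_finset_prod_iff _ |>.1 h
    rwa [((hT q hq).dvd_iff_eq hp.ne_one).1 hpq] at hq
  · intro h; exact Finset.dvd_prod_of_mem _ h

private lemma prod_inj_on_powerset (S : Finset ℕ) (hSP : ∀ p ∈ S, Nat.Prime p) :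
    ∀ T ∈ S.powerset, ∀ T' ∈ S.powerset, (∏ p ∈ T, p) = (∏ p ∈ T', p) → T = T' := by
  intro T hT T' hT' h
  have h1 := Nat.primeFactors_prod (s := T) (fun p hp => hSP p (Finset.mem_powerset.1 hT hp))
  have h2 := Nat.primeFactors_prod (s := T') (fun p hp => hSP p (Finset.mem_powerset.1 hT' hp))
  rw [← h1, ← h2, h]

theorem stmt7 (r c : ℕ → ℂ) (β : ℝ)
    (hr0 : r 0 = 0) (hr1 : r 1 = 1)
    (hrm : ∀ m n : ℕ, Nat.Coprime m n → r (m * n) = r m * r n)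
    (hsf : ∀ n : ℕ, ¬ Squarefree n → r n = 0)
    (hfin : {p : ℕ | Nat.Prime p ∧ r p ≠ 0}.Finite)
    (hc1 : c 1 = 1)
    (hcm : ∀ m n : ℕ, Nat.Coprime m n → c (m * n) = c m * c n) :
    ∑' n : ℕ, (starRingEnd ℂ) (r n) * c n * ((n : ℝ) ^ (-β) : ℝ) *
        ((∑' m : {m : ℕ // Nat.Coprime m n}, ‖r (m : ℕ)‖ ^ 2 : ℝ) : ℂ) =
      ((∏ᶠ p ∈ {p : ℕ | Nat.Prime p}, (1 + ‖r p‖ ^ 2) : ℝ) : ℂ) *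
        ∏ᶠ p ∈ {p : ℕ | Nat.Prime p},
          (1 + (starRingEnd ℂ) (r p) * c p * ((p : ℝ) ^ (-β) : ℝ) /
            ((1 + ‖r p‖ ^ 2 : ℝ) : ℂ)) := by
  classical
  set S : Finset ℕ := hfin.toFinset with hSdef
  have hmem : ∀ p : ℕ, p ∈ S ↔ Nat.Prime p ∧ r p ≠ 0 := fun p => hfin.mem_toFinset
  have hSP : ∀ p ∈ S, Nat.Prime p := fun p hp => ((hmem p).1 hp).1
  have hr_prod := map_prod_mult r hr1 hrm
  have hc_prod := map_prod_mult c hc1 hcm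
  have hnr1 : ‖r 1‖ ^ 2 = 1 := by rw [hr1]; simp
  have hnrm : ∀ m n : ℕ, Nat.Coprime m n → ‖r (m * n)‖ ^ 2 = ‖r m‖ ^ 2 * ‖r n‖ ^ 2 := by
    intro m n h; rw [hrm m n h, norm_mul, mul_pow]
  have hnr_prod := map_prod_mult (fun m => ‖r m‖ ^ 2) hnr1 hnrm
  -- support
  have hsupp : ∀ n : ℕ, r n ≠ 0 → n.primeFactors ⊆ S ∧ ∏ p ∈ n.primeFactors, p = n := by
    intro n hn
    have hsq : Squarefree n := by by_contra h; exact hn (hsf n h)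
    refine ⟨?_, Nat.prod_primeFactors_of_squarefree hsq⟩
    intro p hp
    obtain ⟨hpp, hpd, -⟩ := Nat.mem_primeFactors.1 hp
    have hco : Nat.Coprime p (n / p) := by
      rw [hpp.coprime_iff_not_dvd]
      intro hd
      have h2 : p * p ∣ n := by
        calc p * p ∣ p * (n / p) := mul_dvd_mul_left p hd
        _ = n := Nat.mul_div_cancel' hpd
      exact hpp.not_isUnit (hsq p h2)
    have hsplit : r n = r p * r (n / p) := by
      conv_lhs => rw [← Nat.mul_div_cancel' hpd]
      exact hrm p (n / p) hco
    refine (hmem p).2 ⟨hpp, fun h => hn ?_⟩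
    rw [hsplit, h, zero_mul]
  -- inner sum
  have inner : ∀ n : ℕ,
      (∑' m : {m : ℕ // Nat.Coprime m n}, ‖r (m : ℕ)‖ ^ 2) =
      ∏ p ∈ S.filter (fun p => ¬ p ∣ n), (1 + ‖r p‖ ^ 2) := by
    intro n
    set S' := S.filter (fun p => ¬ p ∣ n) with hS'
    have hS'P : ∀ p ∈ S', Nat.Prime p := fun p hp => hSP p (Finset.mem_filter.1 hp).1
    have h0 : ∀ m ∉ S'.powerset.image fun T => ∏ p ∈ T, p,
        Set.indicator {m : ℕ | Nat.Coprime m n} (fun m => ‖r m‖ ^ 2) m = 0 := by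
      intro m hm
      by_cases hcop : Nat.Coprime m n
      · simp only [Set.indicator_apply, Set.mem_setOf_eq, if_pos hcop]
        by_contra hrm0
        have hrne : r m ≠ 0 := fun h => hrm0 (by rw [h]; simp)
        obtain ⟨hsub, hprod⟩ := hsupp m hrne
        refine hm (Finset.mem_image.2 ⟨m.primeFactors, Finset.mem_powerset.2 ?_, hprod⟩)
        intro p hp
        obtain ⟨hpp, hpm, -⟩ := Nat.mem_primeFactors.1 hp
        refine Finset.mem_filter.2 ⟨hsub hp, fun hpn => ?_⟩
        have hdg := Nat.dvd_gcd hpm hpn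
        rw [Nat.Coprime] at hcop
        rw [hcop] at hdg
        exact hpp.ne_one (Nat.dvd_one.1 hdg)
      · simp only [Set.indicator_apply, Set.mem_setOf_eq, if_neg hcop]
    have hts : (∑' m : {m : ℕ // Nat.Coprime m n}, ‖r (m : ℕ)‖ ^ 2) =
        ∑' m : ℕ, Set.indicator {m : ℕ | Nat.Coprime m n} (fun m => ‖r m‖ ^ 2) m :=
      _root_.tsum_subtype {m : ℕ | Nat.Coprime m n} (fun m => ‖r m‖ ^ 2)
    rw [hts, tsum_eq_sum h0, Finset.sum_image (prod_inj_on_powerset S' hS'P)]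
    have hterm : ∀ T ∈ S'.powerset,
        Set.indicator {m : ℕ | Nat.Coprime m n} (fun m => ‖r m‖ ^ 2) (∏ p ∈ T, p) =
          ∏ p ∈ T, ‖r p‖ ^ 2 := by
      intro T hT
      have hTP : ∀ p ∈ T, Nat.Prime p := fun p hp => hS'P p (Finset.mem_powerset.1 hT hp)
      have hcop : Nat.Coprime (∏ p ∈ T, p) n :=
        Nat.Coprime.prod_left fun p hp =>
          ((hTP p hp).coprime_iff_not_dvd).2
            (Finset.mem_filter.1 (Finset.mem_powerset.1 hT hp)).2
      simp only [Set.indicator_apply, Set.mem_setOf_eq, if_pos hcop]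
      exact hnr_prod T hTP
    rw [Finset.sum_congr rfl hterm]
    have hpa := Finset.prod_add (fun p => ‖r p‖ ^ 2) (fun _ => (1 : ℝ)) S'
    simp only [Finset.prod_const_one, mul_one] at hpa
    rw [← hpa]
    exact Finset.prod_congr rfl fun p _ => add_comm _ _
  -- outer sum
  have h0' : ∀ n ∉ S.powerset.image fun T => ∏ p ∈ T, p,
      (starRingEnd ℂ) (r n) * c n * (((n : ℝ) ^ (-β) : ℝ) : ℂ) *
        ((∑' m : {m : ℕ // Nat.Coprime m n}, ‖r (m : ℕ)‖ ^ 2 : ℝ) : ℂ) = 0 := by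
    intro n hn
    have hrn : r n = 0 := by
      by_contra hrn
      obtain ⟨hsub, hprod⟩ := hsupp n hrn
      exact hn (Finset.mem_image.2 ⟨n.primeFactors, Finset.mem_powerset.2 hsub, hprod⟩)
    rw [hrn]; simp
  rw [tsum_eq_sum h0', Finset.sum_image (prod_inj_on_powerset S hSP)]
  have hterm : ∀ T ∈ S.powerset,
      (starRingEnd ℂ) (r (∏ p ∈ T, p)) * c (∏ p ∈ T, p) *
        ((((∏ p ∈ T, p : ℕ) : ℝ) ^ (-β) : ℝ) : ℂ) *
        ((∑' m : {m : ℕ // Nat.Coprime m (∏ p ∈ T, p)}, ‖r (m : ℕ)‖ ^ 2 : ℝ) : ℂ) =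
      (∏ p ∈ T, ((starRingEnd ℂ) (r p) * c p * (((p : ℝ) ^ (-β) : ℝ) : ℂ))) *
        ∏ p ∈ S \ T, (((1 + ‖r p‖ ^ 2 : ℝ)) : ℂ) := by
    intro T hT
    have hTsub := Finset.mem_powerset.1 hT
    have hTP : ∀ p ∈ T, Nat.Prime p := fun p hp => hSP p (hTsub hp)
    have hfilter : S.filter (fun p => ¬ p ∣ ∏ q ∈ T, q) = S \ T := by
      ext p
      simp only [Finset.mem_filter, Finset.mem_sdiff]
      exact and_congr_right fun hpS => not_congr (dvd_prod_iff_mem (hSP p hpS) T hTP)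
    rw [inner (∏ p ∈ T, p), hfilter]
    congr 1
    · rw [hr_prod T hTP, hc_prod T hTP, map_prod]
      have hcast : ((∏ p ∈ T, p : ℕ) : ℝ) = ∏ p ∈ T, (p : ℝ) := by push_cast; rfl
      rw [hcast, ← Real.finset_prod_rpow T _ (fun p _ => Nat.cast_nonneg p) (-β)]
      push_cast
      rw [← Finset.prod_mul_distrib, ← Finset.prod_mul_distrib]
    · push_cast; rfl
  rw [Finset.sum_congr rfl hterm, ← Finset.prod_add]
  -- right hand side
  have hf1 : (∏ᶠ p ∈ {p : ℕ | Nat.Prime p}, (1 + ‖r p‖ ^ 2)) = ∏ p ∈ S, (1 + ‖r p‖ ^ 2) := by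
    apply finprod_mem_eq_prod_of_subset
    · rintro p ⟨hp1, hp2⟩
      rw [Function.mem_mulSupport] at hp2
      refine (hmem p).2 ⟨hp1, fun h => hp2 ?_⟩
      rw [h]; simp
    · intro p hp; exact hSP p hp
  have hf2 : (∏ᶠ p ∈ {p : ℕ | Nat.Prime p},
      (1 + (starRingEnd ℂ) (r p) * c p * (((p : ℝ) ^ (-β) : ℝ) : ℂ) /
        ((1 + ‖r p‖ ^ 2 : ℝ) : ℂ))) =
      ∏ p ∈ S, (1 + (starRingEnd ℂ) (r p) * c p * (((p : ℝ) ^ (-β) : ℝ) : ℂ) /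
        ((1 + ‖r p‖ ^ 2 : ℝ) : ℂ)) := by
    apply finprod_mem_eq_prod_of_subset
    · rintro p ⟨hp1, hp2⟩
      rw [Function.mem_mulSupport] at hp2
      refine (hmem p).2 ⟨hp1, fun h => hp2 ?_⟩
      rw [h]; simp
    · intro p hp; exact hSP p hp
  rw [hf1, hf2]
  push_cast
  rw [← Finset.prod_mul_distrib]
  apply Finset.prod_congr rfl
  intro p hp
  have hne : (1 + ((‖r p‖ : ℂ)) ^ 2) ≠ 0 := by
    have heq : (1 + ((‖r p‖ : ℂ)) ^ 2) = ((1 + ‖r p‖ ^ 2 : ℝ) : ℂ) := by push_cast; ring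
    rw [heq, Complex.ofReal_ne_zero]
    positivity
  rw [mul_add, mul_one, mul_div_cancel₀ _ hne, add_comm]
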